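/- arXiv:2102.06577 — 8 statements merged into one kernel-verified Lean document; each statement's English description precedes it below -/
import Mathlib

section
/- Let R be a commutative ring, G a monoid, and A a left G-act. The R-linear map φ : R[G∫A] → R[G]#A defined on basis elements by e_{(a,g)} ↦ e_g p_a is an isomorphism of non-unital rings. -/
namespace Persist3

variable (R : Type) [CommRing R] (G : Type) [Monoid G] (A : Type) [MulAction G A]

open scoped Classical in
/-- Multiplication on the category algebra `R[G∫A]`, the free `R`-module on the morphisms
`(a, g)` of the action category `G∫A`:
`e_{(b,h)} · e_{(a,g)} = e_{(a, h*g)}` if `b = g • a`, and `0` otherwise. -/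
noncomputable def catAlgMul (x y : (A × G) →₀ R) : (A × G) →₀ R :=
  y.sum fun p r =>
    x.sum fun q t =>
      if q.1 = p.2 • p.1 then Finsupp.single (p.1, q.2 * p.2) (t * r) else 0

/-- Multiplication on the smash product `R[G] # A`, the free `R[G]`-module on the basis
`{p_a : a ∈ A}`: `(s_g p_a)(t_h p_b) = (s_g t_h) p_b` if `h • b = a`, and `0` otherwise. -/
noncomputable def smashMul (x y : A →₀ MonoidAlgebra R G) : A →₀ MonoidAlgebra R G :=
  y.sum fun b t =>
    Finsupp.single b (Finsupp.sum t.coeff fun h r => x (h • b) * MonoidAlgebra.single h r)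

/-- The `R`-linear map `φ : R[G∫A] → R[G] # A` given on basis elements by
`e_{(a,g)} ↦ e_g p_a`. -/
noncomputable def phi : ((A × G) →₀ R) →ₗ[R] (A →₀ MonoidAlgebra R G) :=
  Finsupp.lsum R fun p =>
    (Finsupp.lsingle p.1).comp (MonoidAlgebra.lsingle (R := R) (S := R) p.2)

/-!
On underlying modules, `φ` is currying `(A × G →₀ R) ≃ (A →₀ G →₀ R)` followed by the
identification `G →₀ R = R[G]`, hence bijective. Both products are biadditive, so
multiplicativity reduces to basis elements: `e_{(b,h)} e_{(a,g)}` and `(e_h p_b)(e_g p_a)` are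
`e_{(a,hg)}` and `e_{hg} p_a` when `b = g • a`, and both vanish otherwise.
-/

open scoped Classical in
theorem catAlgMul_single_single (q p : A × G) (t r : R) :
    catAlgMul R G A (Finsupp.single q t) (Finsupp.single p r) =
      if q.1 = p.2 • p.1 then Finsupp.single (p.1, q.2 * p.2) (t * r) else 0 := by
  unfold catAlgMul
  rw [Finsupp.sum_single_index, Finsupp.sum_single_index] <;> simp

theorem catAlgMul_add_left (x x' y : (A × G) →₀ R) :
    catAlgMul R G A (x + x') y = catAlgMul R G A x y + catAlgMul R G A x' y := by
  unfold catAlgMul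
  rw [← Finsupp.sum_add]
  refine Finsupp.sum_congr fun p _ => Finsupp.sum_add_index' (fun q => ?_) fun q t t' => ?_
  · simp
  · split_ifs <;> simp [add_mul]

theorem catAlgMul_add_right (x y y' : (A × G) →₀ R) :
    catAlgMul R G A x (y + y') = catAlgMul R G A x y + catAlgMul R G A x y' := by
  unfold catAlgMul
  refine Finsupp.sum_add_index' (fun p => ?_) fun p r r' => ?_
  · simp
  · rw [← Finsupp.sum_add]
    refine Finsupp.sum_congr fun q _ => ?_
    split_ifs <;> simp [mul_add]

theorem smashMul_single_right (x : A →₀ MonoidAlgebra R G) (b : A) (h : G) (r : R) :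
    smashMul R G A x (Finsupp.single b (MonoidAlgebra.single h r)) =
      Finsupp.single b (x (h • b) * MonoidAlgebra.single h r) := by
  unfold smashMul
  rw [Finsupp.sum_single_index, MonoidAlgebra.coeff_single, Finsupp.sum_single_index] <;> simp

theorem smashMul_add_left (x x' y : A →₀ MonoidAlgebra R G) :
    smashMul R G A (x + x') y = smashMul R G A x y + smashMul R G A x' y := by
  unfold smashMul
  rw [← Finsupp.sum_add]
  refine Finsupp.sum_congr fun b _ => ?_
  rw [← Finsupp.single_add, ← Finsupp.sum_add]
  simp [add_mul]

theorem smashMul_add_right (x y y' : A →₀ MonoidAlgebra R G) :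
    smashMul R G A x (y + y') = smashMul R G A x y + smashMul R G A x y' := by
  unfold smashMul
  refine Finsupp.sum_add_index' (fun b => by simp) fun b t t' => ?_
  rw [← Finsupp.single_add, MonoidAlgebra.coeff_add,
    Finsupp.sum_add_index' (fun h => by simp) fun h r r' => by rw [MonoidAlgebra.single_add, mul_add]]

omit [MulAction G A] in
theorem phi_single (a : A) (g : G) (r : R) :
    phi R G A (Finsupp.single (a, g) r) = Finsupp.single a (MonoidAlgebra.single g r) := by
  simp [phi]

omit [MulAction G A] in
theorem phi_eq_curry : phi R G A =
    ((Finsupp.curryLinearEquiv R).trans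
      (Finsupp.mapRange.linearEquiv (MonoidAlgebra.coeffLinearEquiv R).symm)).toLinearMap := by
  refine Finsupp.lhom_ext fun ⟨a, g⟩ r => ?_
  simp [phi_single, Finsupp.curry_single]

omit [MulAction G A] in
theorem phi_bijective : Function.Bijective (phi R G A) := by
  rw [phi_eq_curry]
  exact LinearEquiv.bijective _

theorem phi_catAlgMul_single_single (q p : A × G) (t r : R) :
    phi R G A (catAlgMul R G A (Finsupp.single q t) (Finsupp.single p r)) =
      smashMul R G A (phi R G A (Finsupp.single q t)) (phi R G A (Finsupp.single p r)) := by
  classical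
  rw [catAlgMul_single_single, phi_single, phi_single, smashMul_single_right, Finsupp.single_apply]
  split_ifs
  · rw [phi_single, MonoidAlgebra.single_mul_single]
  · rw [map_zero, zero_mul, Finsupp.single_zero]

/-- The `R`-linear map `φ : R[G∫A] → R[G] # A`, `e_{(a,g)} ↦ e_g p_a`,
is an isomorphism of non-unital rings: it is bijective, additive (indeed `R`-linear) and
multiplicative. -/
theorem statement3 :
    (∀ (a : A) (g : G),
        phi R G A (Finsupp.single (a, g) 1) =
          Finsupp.single a (MonoidAlgebra.single g 1)) ∧
    Function.Bijective (phi R G A) ∧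
    (∀ x y : (A × G) →₀ R,
        phi R G A (catAlgMul R G A x y) = smashMul R G A (phi R G A x) (phi R G A y)) := by
  refine ⟨fun a g => phi_single R G A a g 1, phi_bijective R G A, fun x y => ?_⟩
  induction x using Finsupp.induction_linear with
  | zero => simp [catAlgMul, smashMul]
  | add x x' hx hx' => rw [catAlgMul_add_left, map_add, map_add, smashMul_add_left, hx, hx']
  | single q t =>
    induction y using Finsupp.induction_linear with
    | zero => simp [catAlgMul, smashMul]
    | add y y' hy hy' => rw [catAlgMul_add_right, map_add, map_add, smashMul_add_right, hy, hy']
    | single p r => exact phi_catAlgMul_single_single R G A q p t r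

end Persist3
end

section
/- Let R be a commutative ring, C a poset, M an RC-module, and S ⊆ C a subset. Then (1) M is S-generated if and only if B_S(M) ⊆ S, and (2) M is S-presented if and only if B_S(M) ∪ D_S(M) ⊆ S. -/
/-!
For `c ∈ S` the index poset `{d ∈ S | d ≤ c}` of `μ_{M,c}` has the top element `c`, so `μ_{M,c}` is
an isomorphism; for `c ∉ S` it equals the index poset `{d ∈ S | d < c}` of `λ_{M,c}`, so
`μ_{M,c} = λ_{M,c}`. Hence `μ_M` is epi (iso) iff `λ_{M,c}` is epi (epi and mono) for all `c ∉ S`.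
-/

open CategoryTheory Limits

namespace Persist

variable (R : Type) [CommRing R] (C : Type) [PartialOrder C]

/-- The natural map `colim_{d ∈ S, d < c} M(d) → M(c)`. -/
noncomputable def lambdaMap (M : C ⥤ ModuleCat.{0} R) (S : Set C) (c : C) :
    colimit (ObjectProperty.ι (fun d : C => d ∈ S ∧ d < c) ⋙ M) ⟶ M.obj c :=
  colimit.desc (ObjectProperty.ι (fun d : C => d ∈ S ∧ d < c) ⋙ M)
    { pt := M.obj c
      ι :=
        { app := fun d => M.map (homOfLE d.property.2.le)
          naturality := fun d d' f => by
            dsimp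
            rw [Category.comp_id, ← M.map_comp]
            exact congrArg M.map (Subsingleton.elim _ _) } }

/-- The natural map `colim_{d ∈ S, d ≤ c} M(d) → M(c)`, i.e. the component at `c` of the
counit `ind_S res_S M ⟶ M`. -/
noncomputable def muMap (M : C ⥤ ModuleCat.{0} R) (S : Set C) (c : C) :
    colimit (ObjectProperty.ι (fun d : C => d ∈ S ∧ d ≤ c) ⋙ M) ⟶ M.obj c :=
  colimit.desc (ObjectProperty.ι (fun d : C => d ∈ S ∧ d ≤ c) ⋙ M)
    { pt := M.obj c
      ι :=
        { app := fun d => M.map (homOfLE d.property.2)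
          naturality := fun d d' f => by
            dsimp
            rw [Category.comp_id, ← M.map_comp]
            exact congrArg M.map (Subsingleton.elim _ _) } }

/-- `M` is `S`-generated: the counit `ind_S res_S M ⟶ M` is an epimorphism
(pointwise criterion). -/
def SGenerated (M : C ⥤ ModuleCat.{0} R) (S : Set C) : Prop :=
  ∀ c : C, Epi (muMap R C M S c)

/-- `M` is `S`-presented: the counit `ind_S res_S M ⟶ M` is an isomorphism
(pointwise criterion). -/
def SPresented (M : C ⥤ ModuleCat.{0} R) (S : Set C) : Prop :=
  ∀ c : C, IsIso (muMap R C M S c)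

/-- The set of births of `M` relative to `S`. -/
def births (M : C ⥤ ModuleCat.{0} R) (S : Set C) : Set C :=
  {c : C | ¬ Epi (lambdaMap R C M S c)}

/-- The set of deaths of `M` relative to `S`. -/
def deaths (M : C ⥤ ModuleCat.{0} R) (S : Set C) : Set C :=
  {c : C | ¬ Mono (lambdaMap R C M S c)}

/-- The `S`-splitting of `M` at `c`: the cokernel of `λ_{M,c}`. -/
noncomputable def splitObj (M : C ⥤ ModuleCat.{0} R) (S : Set C) (c : C) : ModuleCat.{0} R :=
  cokernel (lambdaMap R C M S c)

/-- Functoriality of the `S`-splitting at `c`. -/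
noncomputable def splitMap {L M : C ⥤ ModuleCat.{0} R} (f : L ⟶ M) (S : Set C) (c : C) :
    splitObj R C L S c ⟶ splitObj R C M S c :=
  cokernel.map (lambdaMap R C L S c) (lambdaMap R C M S c)
    (colimMap (Functor.whiskerLeft (ObjectProperty.ι (fun d : C => d ∈ S ∧ d < c)) f))
    (f.app c)
    (by
      apply colimit.hom_ext
      intro d
      simp [lambdaMap, f.naturality])

/-- The support of `M`. -/
def supp (M : C ⥤ ModuleCat.{0} R) : Set C :=
  {c : C | ¬ IsZero (M.obj c)}

/-- A subset of a poset is Artinian if `<` is well-founded on it (no infinite strictly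
descending chains). -/
def ArtinianSubset (S : Set C) : Prop :=
  S.WellFoundedOn (· < ·)

/-- `lambdaMap` and `muMap` are both this map, definitionally; stating it for an arbitrary
predicate `P` allows rewriting `P`. -/
noncomputable def descOfLE (M : C ⥤ ModuleCat.{0} R) (P : C → Prop) (c : C)
    (hP : ∀ d, P d → d ≤ c) :
    colimit (ObjectProperty.ι P ⋙ M) ⟶ M.obj c :=
  colimit.desc (ObjectProperty.ι P ⋙ M)
    { pt := M.obj c
      ι :=
        { app := fun d => M.map (homOfLE (hP d.obj d.property))
          naturality := fun d d' f => by
            dsimp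
            rw [Category.comp_id, ← M.map_comp]
            exact congrArg M.map (Subsingleton.elim _ _) } }

lemma descOfLE_eq_comp_of_eq (M : C ⥤ ModuleCat.{0} R) {P Q : C → Prop} (h : P = Q) (c : C)
    (hP : ∀ d, P d → d ≤ c) (hQ : ∀ d, Q d → d ≤ c) :
    ∃ e : colimit (ObjectProperty.ι P ⋙ M) ≅ colimit (ObjectProperty.ι Q ⋙ M),
      descOfLE R C M P c hP = e.hom ≫ descOfLE R C M Q c hQ := by
  subst h
  exact ⟨Iso.refl _, (Category.id_comp _).symm⟩

lemma exists_iso_muMap_eq_comp_lambdaMap (M : C ⥤ ModuleCat.{0} R) {S : Set C} {c : C}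
    (hc : c ∉ S) :
    ∃ e : colimit (ObjectProperty.ι (fun d : C => d ∈ S ∧ d ≤ c) ⋙ M) ≅
        colimit (ObjectProperty.ι (fun d : C => d ∈ S ∧ d < c) ⋙ M),
      muMap R C M S c = e.hom ≫ lambdaMap R C M S c := by
  have h : (fun d : C => d ∈ S ∧ d ≤ c) = (fun d : C => d ∈ S ∧ d < c) := by
    funext d
    exact propext (and_congr_right fun hd => (ne_of_mem_of_not_mem hd hc).le_iff_lt)
  exact descOfLE_eq_comp_of_eq R C M h c (fun _ hd => hd.2) (fun _ hd => hd.2.le)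

lemma isIso_muMap_of_mem (M : C ⥤ ModuleCat.{0} R) {S : Set C} {c : C} (hc : c ∈ S) :
    IsIso (muMap R C M S c) := by
  let P : C → Prop := fun d : C => d ∈ S ∧ d ≤ c
  have hterm : IsTerminal (⟨c, hc, le_rfl⟩ : ObjectProperty.FullSubcategory P) :=
    IsTerminal.ofUniqueHom (fun d => ObjectProperty.homMk (homOfLE d.property.2))
      (fun _ _ => by ext; exact Subsingleton.elim _ _)
  exact (colimit.isoColimitCocone ⟨_, colimitOfDiagramTerminal hterm _⟩).isIso_hom

lemma epi_muMap_iff (M : C ⥤ ModuleCat.{0} R) (S : Set C) (c : C) :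
    Epi (muMap R C M S c) ↔ (c ∉ S → Epi (lambdaMap R C M S c)) := by
  by_cases hc : c ∈ S
  · have := isIso_muMap_of_mem R C M hc
    exact iff_of_true inferInstance (absurd hc)
  · obtain ⟨e, he⟩ := exists_iso_muMap_eq_comp_lambdaMap R C M hc
    rw [he, epi_comp_iff_of_epi]
    exact (imp_iff_right hc).symm

lemma isIso_muMap_iff (M : C ⥤ ModuleCat.{0} R) (S : Set C) (c : C) :
    IsIso (muMap R C M S c) ↔
      (c ∉ S → Epi (lambdaMap R C M S c) ∧ Mono (lambdaMap R C M S c)) := by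
  by_cases hc : c ∈ S
  · exact iff_of_true (isIso_muMap_of_mem R C M hc) (absurd hc)
  · obtain ⟨e, he⟩ := exists_iso_muMap_eq_comp_lambdaMap R C M hc
    rw [he, isIso_comp_left_iff, isIso_iff_mono_and_epi, and_comm]
    exact (imp_iff_right hc).symm

/-- `M` is `S`-generated iff `B_S(M) ⊆ S`, and `M` is `S`-presented iff
`B_S(M) ∪ D_S(M) ⊆ S`. -/
theorem statement8 (M : C ⥤ ModuleCat.{0} R) (S : Set C) :
    (SGenerated R C M S ↔ births R C M S ⊆ S) ∧
    (SPresented R C M S ↔ births R C M S ∪ deaths R C M S ⊆ S) := by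
  refine ⟨forall_congr' fun c => ?_, forall_congr' fun c => ?_⟩
  · rw [epi_muMap_iff]
    exact not_imp_comm
  · rw [isIso_muMap_iff]
    simp only [births, deaths, Set.mem_union, Set.mem_ofPred_eq, ← not_and_or]
    exact not_imp_comm

end Persist
end

section
/- Let R be a commutative ring, C a poset, S ⊆ C a subset, and M an S-generated RC-module. Then B_C(M) = B_S(M). -/
/-! Since `S`-generation says that every `M(d)` is spanned by the images of the `M(e)` with
`e ∈ S`, `e ≤ d`, the image in `M(c)` of any `M(d)` with `d < c` is already spanned by images
of `M(e)` with `e ∈ S`, `e < c`. Hence `λ_{M,c}` relative to `C` and relative to `S` have the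
same image. -/

open CategoryTheory Limits

namespace ModuleCat

universe u v w w'

variable {R : Type u} [Ring R] {J : Type w} [Category.{w'} J]

theorem range_le_iff_forall_range_colimit_ι_comp_le {F : J ⥤ ModuleCat.{v} R} [HasColimit F]
    {X : ModuleCat.{v} R} (f : colimit F ⟶ X) (N : Submodule R X) :
    LinearMap.range f.hom ≤ N ↔ ∀ j, LinearMap.range (colimit.ι F j ≫ f).hom ≤ N := by
  refine ⟨fun h j => (LinearMap.range_comp_le_range _ _).trans h, fun h => ?_⟩
  have hzero : f ≫ ofHom N.mkQ = 0 := colimit.hom_ext fun j => by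
    ext x
    simpa using h j ⟨x, rfl⟩
  rw [← N.ker_mkQ, LinearMap.range_le_ker_iff]
  exact congrArg Hom.hom hzero

end ModuleCat

namespace Persist

variable (R : Type) [CommRing R] (C : Type) [PartialOrder C]

theorem range_lambdaMap_le_iff (M : C ⥤ ModuleCat.{0} R) (T : Set C) (c : C)
    (N : Submodule R (M.obj c)) :
    LinearMap.range (lambdaMap R C M T c).hom ≤ N ↔
      ∀ d ∈ T, ∀ h : d < c, LinearMap.range (M.map (homOfLE h.le)).hom ≤ N := by
  rw [ModuleCat.range_le_iff_forall_range_colimit_ι_comp_le]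
  simp only [lambdaMap, colimit.ι_desc]
  exact ⟨fun h d hd hdc => h ⟨d, hd, hdc⟩, fun h d => h d.obj d.property.1 d.property.2⟩

theorem range_map_le_range_lambdaMap (M : C ⥤ ModuleCat.{0} R) {T : Set C} {d c : C}
    (hd : d ∈ T) (h : d < c) :
    LinearMap.range (M.map (homOfLE h.le)).hom ≤ LinearMap.range (lambdaMap R C M T c).hom :=
  (range_lambdaMap_le_iff R C M T c _).1 le_rfl d hd h

theorem range_lambdaMap_mono (M : C ⥤ ModuleCat.{0} R) {T T' : Set C} (hT : T ⊆ T') (c : C) :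
    LinearMap.range (lambdaMap R C M T c).hom ≤ LinearMap.range (lambdaMap R C M T' c).hom :=
  (range_lambdaMap_le_iff R C M T c _).2 fun _ hd h =>
    range_map_le_range_lambdaMap R C M (hT hd) h

theorem range_map_le_range_lambdaMap_of_sGenerated {M : C ⥤ ModuleCat.{0} R} {S : Set C}
    (hM : SGenerated R C M S) {d c : C} (h : d < c) :
    LinearMap.range (M.map (homOfLE h.le)).hom ≤ LinearMap.range (lambdaMap R C M S c).hom := by
  have hmu : LinearMap.range (muMap R C M S d).hom = ⊤ :=
    (ModuleCat.epi_iff_range_eq_top _).1 (hM d)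
  rw [← LinearMap.range_comp_of_range_eq_top _ hmu, ← ModuleCat.hom_comp,
    ModuleCat.range_le_iff_forall_range_colimit_ι_comp_le]
  intro e
  have hec : e.obj < c := e.property.2.trans_lt h
  have hcomp : colimit.ι _ e ≫ muMap R C M S d ≫ M.map (homOfLE h.le) =
      M.map (homOfLE hec.le) := by
    rw [muMap, colimit.ι_desc_assoc, ← M.map_comp]
    rfl
  rw [hcomp]
  exact range_map_le_range_lambdaMap R C M e.property.1 hec

theorem range_lambdaMap_eq_of_sGenerated {M : C ⥤ ModuleCat.{0} R} {S T : Set C}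
    (hM : SGenerated R C M S) (hST : S ⊆ T) (c : C) :
    LinearMap.range (lambdaMap R C M T c).hom = LinearMap.range (lambdaMap R C M S c).hom :=
  le_antisymm
    ((range_lambdaMap_le_iff R C M T c _).2 fun _ _ h =>
      range_map_le_range_lambdaMap_of_sGenerated R C hM h)
    (range_lambdaMap_mono R C M hST c)

/-- If `M` is `S`-generated then `B_C(M) = B_S(M)`. -/
theorem statement9 (M : C ⥤ ModuleCat.{0} R) (S : Set C) (hM : SGenerated R C M S) :
    births R C M Set.univ = births R C M S := by
  ext c
  simp only [births, Set.mem_ofPred_eq, ModuleCat.epi_iff_range_eq_top,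
    range_lambdaMap_eq_of_sGenerated R C hM (Set.subset_univ S) c]

end Persist
end

section
/- Let R be a commutative ring, C a poset, M an RC-module, and S ⊆ C a subset. If supp(M) ∩ S has a minimal element c, then S_{S,c}M ≠ 0 (a Nakayama-type lemma). -/
open CategoryTheory Limits

namespace Persist

variable (R : Type) [CommRing R] (C : Type) [PartialOrder C]

theorem lambdaMap_eq_zero_of_isZero {M : C ⥤ ModuleCat.{0} R} {S : Set C} {c : C}
    (h : ∀ d ∈ S, d < c → IsZero (M.obj d)) : lambdaMap R C M S c = 0 :=
  colimit.hom_ext fun d => by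
    rw [comp_zero]
    exact (h d.obj d.property.1 d.property.2).eq_zero_of_src _

noncomputable def splitObjIsoOfLambdaMapEqZero {M : C ⥤ ModuleCat.{0} R} {S : Set C} {c : C}
    (h : lambdaMap R C M S c = 0) : splitObj R C M S c ≅ M.obj c :=
  cokernelIsoOfEq h ≪≫ cokernelZeroIsoTarget

/-- (Nakayama-type lemma) If `supp(M) ∩ S` has a minimal element `c`, then
`S_{S,c} M ≠ 0`. -/
theorem statement10 (M : C ⥤ ModuleCat.{0} R) (S : Set C) (c : C)
    (hc : c ∈ supp R C M ∩ S) (hmin : ∀ d ∈ supp R C M ∩ S, ¬ d < c) :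
    ¬ IsZero (splitObj R C M S c) := by
  have hbelow : ∀ d ∈ S, d < c → IsZero (M.obj d) := fun d hdS hdc =>
    not_not.mp fun hd => hmin d ⟨hd, hdS⟩ hdc
  have hlambda : lambdaMap R C M S c = 0 := lambdaMap_eq_zero_of_isZero R C hbelow
  exact fun hsplit => hc.1 (hsplit.of_iso (splitObjIsoOfLambdaMapEqZero R C hlambda).symm)

end Persist
end

section
/- Let R be a commutative ring, C a poset, S ⊆ C an Artinian subset, and f : N → M an epimorphism of S-generated RC-modules. If (Ker f)(c) ⊆ Im(λ_{N,c}) for all c ∈ C, then f is a minimal epimorphism. Conversely, if f is minimal and S_{S,c}M is a projective R-module for every c ∈ S, then (Ker f)(c) ⊆ Im(λ_{N,c}) for all c ∈ C. -/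
open CategoryTheory Limits

namespace Persist

variable (R : Type) [CommRing R] (C : Type) [PartialOrder C]

/-- An epimorphism `f : N ⟶ M` is minimal if for every `g : L ⟶ N`, `g ≫ f` is an
epimorphism iff `g` is. -/
def IsMinimalEpi {N M : C ⥤ ModuleCat.{0} R} (f : N ⟶ M) : Prop :=
  ∀ (L : C ⥤ ModuleCat.{0} R) (g : L ⟶ N), Epi (g ≫ f) ↔ Epi g

/-!
Both directions rest on a Nakayama-type lemma: if `S` is Artinian and `M` is `S`-generated, a
subfunctor `P ⊆ M` with `Im λ_{M,c} + P(c) = M(c)` for all `c ∈ S` is all of `M`. Indeed, by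
well-founded induction on `S`, `P` contains `Im λ_{M,c}` and hence `M(c)` for `c ∈ S`, and
`S`-generation carries this to every `c`.

If `Ker f ⊆ Im λ_N` and `g ≫ f` is epi, the image of `g` is such a subfunctor of `N`. Conversely,
projectivity of `S_{S,c}M` gives maps `t_c : S_{S,c}M → N(c)` lifting the projections
`M(c) → S_{S,c}M` through `f`; the image under `f` of the subfunctor of `N` generated by the `t_c`
is all of `M` by the lemma, so by minimality that subfunctor is `N`. An element
`x = λ(y) + t_c(v)` of `Ker f` then has `v = 0`, as one sees by projecting `f x` to `S_{S,c}M`.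
-/

variable {R C}

section ModuleCat

variable {A B : ModuleCat.{0} R}

theorem ker_hom_cokernel_π (φ : A ⟶ B) :
    LinearMap.ker (cokernel.π φ).hom = LinearMap.range φ.hom :=
  ((ShortComplex.moduleCat_exact_iff_range_eq_ker _).mp
    (ShortComplex.exact_of_g_is_cokernel (ShortComplex.mk φ (cokernel.π φ) (cokernel.condition φ))
      (cokernelIsCokernel φ))).symm

theorem iSup_range_colimit_ι {J : Type} [SmallCategory J] (F : J ⥤ ModuleCat.{0} R) :
    ⨆ j, LinearMap.range (colimit.ι F j).hom = ⊤ := by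
  set T := ⨆ j, LinearMap.range (colimit.ι F j).hom
  have hT : (ModuleCat.ofHom T.mkQ :
      colimit F ⟶ ModuleCat.of R ((colimit F : ModuleCat.{0} R) ⧸ T)) = 0 := by
    refine colimit.hom_ext fun j => ?_
    ext x
    simpa using le_iSup (fun j => LinearMap.range (colimit.ι F j).hom) j ⟨x, rfl⟩
  simpa using congrArg (fun φ => LinearMap.ker φ.hom) hT

theorem range_colimit_desc {J : Type} [SmallCategory J] (F : J ⥤ ModuleCat.{0} R)
    (c : Cocone F) :
    LinearMap.range (colimit.desc F c).hom = ⨆ j, LinearMap.range (c.ι.app j).hom := by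
  rw [LinearMap.range_eq_map, ← iSup_range_colimit_ι F, Submodule.map_iSup]
  simp_rw [← LinearMap.range_comp, ← ModuleCat.hom_comp, colimit.ι_desc]

end ModuleCat

theorem epi_iff_forall_surjective {J : Type} [Category J] {F G : J ⥤ ModuleCat.{0} R}
    (f : F ⟶ G) : Epi f ↔ ∀ j, Function.Surjective (f.app j) := by
  simp only [NatTrans.epi_iff_epi_app, ModuleCat.epi_iff_surjective]

section Subfunctor

variable {J : Type} [Category J] (N : J ⥤ ModuleCat.{0} R) (P : ∀ j, Submodule R (N.obj j))

def IsSubfunctor : Prop :=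
  ∀ ⦃i j : J⦄ (h : i ⟶ j), (P i).map (N.map h).hom ≤ P j

variable {N P} (hP : IsSubfunctor N P)

theorem IsSubfunctor.map_app (hP : IsSubfunctor N P) {M : J ⥤ ModuleCat.{0} R} (f : N ⟶ M) :
    IsSubfunctor M fun j => (P j).map (f.app j).hom := by
  intro i j h
  rw [← Submodule.map_comp, ← ModuleCat.hom_comp, ← f.naturality, ModuleCat.hom_comp,
    Submodule.map_comp]
  exact Submodule.map_mono (hP h)

theorem isSubfunctor_range {L : J ⥤ ModuleCat.{0} R} (g : L ⟶ N) :
    IsSubfunctor N fun j => LinearMap.range (g.app j).hom := by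
  simpa only [LinearMap.range_eq_map] using
    IsSubfunctor.map_app (P := fun j => ⊤) (fun _ _ _ => le_top) g

@[simps]
noncomputable def subfunctor : J ⥤ ModuleCat.{0} R where
  obj j := ModuleCat.of R (P j)
  map h := ModuleCat.ofHom ((N.map h).hom.restrict fun x hx => hP h ⟨x, hx, rfl⟩)
  map_id j := by ext; simp
  map_comp h h' := by ext; simp

@[simps]
noncomputable def subfunctorι : subfunctor hP ⟶ N where
  app j := ModuleCat.ofHom (P j).subtype

theorem epi_subfunctorι_iff : Epi (subfunctorι hP) ↔ ∀ j, P j = ⊤ := by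
  refine (epi_iff_forall_surjective _).trans (forall_congr' fun j => ?_)
  change Function.Surjective (P j).subtype ↔ _
  rw [← LinearMap.range_eq_top, Submodule.range_subtype]

theorem epi_subfunctorι_comp_iff {M : J ⥤ ModuleCat.{0} R} (f : N ⟶ M) :
    Epi (subfunctorι hP ≫ f) ↔ ∀ j, (P j).map (f.app j).hom = ⊤ := by
  refine (epi_iff_forall_surjective _).trans (forall_congr' fun j => ?_)
  change Function.Surjective ((f.app j).hom ∘ₗ (P j).subtype) ↔ _
  rw [← LinearMap.range_eq_top, LinearMap.range_comp, Submodule.range_subtype]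

end Subfunctor

section Poset

variable {M N : C ⥤ ModuleCat.{0} R} {S : Set C} {c d : C}

theorem range_lambdaMap (M : C ⥤ ModuleCat.{0} R) (S : Set C) (c : C) :
    LinearMap.range (lambdaMap R C M S c).hom =
      ⨆ d : ObjectProperty.FullSubcategory (fun d : C => d ∈ S ∧ d < c),
        LinearMap.range (M.map (homOfLE d.property.2.le)).hom :=
  range_colimit_desc _ _

theorem SGenerated.iSup_range_map_eq_top (hM : SGenerated R C M S) (c : C) :
    ⨆ d : ObjectProperty.FullSubcategory (fun d : C => d ∈ S ∧ d ≤ c),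
      LinearMap.range (M.map (homOfLE d.property.2)).hom = ⊤ := by
  have hμ := LinearMap.range_eq_top.mpr ((ModuleCat.epi_iff_surjective _).mp (hM c))
  rwa [muMap, range_colimit_desc] at hμ

theorem map_le_range_lambdaMap (p : Submodule R (N.obj d)) (hd : d ∈ S) (hdc : d < c) :
    p.map (N.map (homOfLE hdc.le)).hom ≤ LinearMap.range (lambdaMap R C N S c).hom := by
  rw [range_lambdaMap]
  exact LinearMap.map_le_range.trans
    (le_iSup_of_le (⟨d, hd, hdc⟩ : ObjectProperty.FullSubcategory _) le_rfl)

noncomputable abbrev splitObjπ (M : C ⥤ ModuleCat.{0} R) (S : Set C) (c : C) :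
    M.obj c ⟶ splitObj R C M S c :=
  cokernel.π (lambdaMap R C M S c)

theorem ker_splitObjπ (M : C ⥤ ModuleCat.{0} R) (S : Set C) (c : C) :
    LinearMap.ker (splitObjπ M S c).hom = LinearMap.range (lambdaMap R C M S c).hom :=
  ker_hom_cokernel_π _

theorem surjective_splitObjπ (M : C ⥤ ModuleCat.{0} R) (S : Set C) (c : C) :
    Function.Surjective (splitObjπ M S c) :=
  (ModuleCat.epi_iff_surjective _).mp (inferInstanceAs (Epi (cokernel.π _)))

theorem map_range_lambdaMap_le (f : N ⟶ M) (S : Set C) (c : C) :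
    (LinearMap.range (lambdaMap R C N S c).hom).map (f.app c).hom ≤
      LinearMap.range (lambdaMap R C M S c).hom := by
  rw [range_lambdaMap, range_lambdaMap, Submodule.map_iSup]
  refine iSup_mono fun d => ?_
  rw [← LinearMap.range_comp, ← ModuleCat.hom_comp, f.naturality, ModuleCat.hom_comp]
  exact LinearMap.range_comp_le_range _ _

theorem IsSubfunctor.range_map_le {P : ∀ c, Submodule R (M.obj c)} (hP : IsSubfunctor M P)
    {d c : C} (h : d ⟶ c) (hd : P d = ⊤) : LinearMap.range (M.map h).hom ≤ P c := by
  rw [LinearMap.range_eq_map, ← hd]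
  exact hP h

theorem IsSubfunctor.eq_top_of_sup_range_lambdaMap {P : ∀ c, Submodule R (M.obj c)}
    (hP : IsSubfunctor M P) (hS : ArtinianSubset C S) (hM : SGenerated R C M S)
    (hsup : ∀ c ∈ S, LinearMap.range (lambdaMap R C M S c).hom ⊔ P c = ⊤) (c : C) :
    P c = ⊤ := by
  have hPS : ∀ c ∈ S, P c = ⊤ := by
    intro c hc
    refine hS.induction hc (P := fun c => P c = ⊤) fun c hc ih => ?_
    have hle : LinearMap.range (lambdaMap R C M S c).hom ≤ P c := by
      rw [range_lambdaMap]
      exact iSup_le fun d => hP.range_map_le _ (ih d.obj d.property.1 d.property.2)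
    rw [← hsup c hc, sup_eq_right.mpr hle]
  rw [eq_top_iff, ← hM.iSup_range_map_eq_top c]
  exact iSup_le fun d => hP.range_map_le _ (hPS d.obj d.property.1)

def generatedSubmodule (N : C ⥤ ModuleCat.{0} R) (S : Set C) (G : ∀ c, Submodule R (N.obj c))
    (c : C) : Submodule R (N.obj c) :=
  ⨆ d : {d : C // d ∈ S ∧ d ≤ c}, (G d).map (N.map (homOfLE d.2.2)).hom

variable {G : ∀ c, Submodule R (N.obj c)}

theorem isSubfunctor_generatedSubmodule : IsSubfunctor N (generatedSubmodule N S G) := by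
  intro c c' h
  rw [generatedSubmodule, Submodule.map_iSup]
  refine iSup_le fun d => ?_
  rw [← Submodule.map_comp, ← ModuleCat.hom_comp, ← N.map_comp]
  exact le_iSup_of_le (⟨d, d.2.1, d.2.2.trans (leOfHom h)⟩ : {d : C // d ∈ S ∧ d ≤ c'}) le_rfl

theorem le_generatedSubmodule (hc : c ∈ S) : G c ≤ generatedSubmodule N S G c := by
  refine le_iSup_of_le (⟨c, hc, le_rfl⟩ : {d : C // d ∈ S ∧ d ≤ c}) ?_
  rw [show homOfLE (le_refl c) = 𝟙 c from rfl, N.map_id]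
  exact (Submodule.map_id _).ge

theorem generatedSubmodule_le_sup :
    generatedSubmodule N S G c ≤ LinearMap.range (lambdaMap R C N S c).hom ⊔ G c := by
  refine iSup_le fun ⟨d, hd, hdc⟩ => hdc.eq_or_lt.elim (fun h => ?_) fun h => ?_
  · subst h
    rw [show homOfLE (le_refl d) = 𝟙 d from rfl, N.map_id, ModuleCat.hom_id, Submodule.map_id]
    exact le_sup_right
  · exact le_sup_of_le_left (map_le_range_lambdaMap _ hd h)

theorem generatedSubmodule_le_range_lambdaMap (hc : c ∉ S) :
    generatedSubmodule N S G c ≤ LinearMap.range (lambdaMap R C N S c).hom :=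
  iSup_le fun ⟨_, hd, hdc⟩ =>
    map_le_range_lambdaMap _ hd (hdc.lt_of_ne (ne_of_mem_of_not_mem hd hc))

end Poset

section Minimality

variable {N M : C ⥤ ModuleCat.{0} R} {S : Set C}

theorem isMinimalEpi_of_ker_le_range_lambdaMap (hS : ArtinianSubset C S) (f : N ⟶ M)
    (hf : Epi f) (hN : SGenerated R C N S)
    (hker : ∀ c, LinearMap.ker (f.app c).hom ≤ LinearMap.range (lambdaMap R C N S c).hom) :
    IsMinimalEpi R C f := by
  intro L g
  refine ⟨fun hgf => ?_, fun _ => epi_comp g f⟩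
  have hsup : ∀ c,
      LinearMap.range (lambdaMap R C N S c).hom ⊔ LinearMap.range (g.app c).hom = ⊤ := by
    intro c
    have hgf : (LinearMap.range (g.app c).hom).map (f.app c).hom = ⊤ := by
      rw [← LinearMap.range_comp, ← ModuleCat.hom_comp, ← NatTrans.comp_app,
        LinearMap.range_eq_top]
      exact (epi_iff_forall_surjective _).mp hgf c
    rw [LinearMap.map_eq_top_iff
      (LinearMap.range_eq_top.mpr ((epi_iff_forall_surjective f).mp hf c))] at hgf
    rw [eq_top_iff, ← hgf, sup_comm]
    exact sup_le_sup_right (hker c) _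
  refine (epi_iff_forall_surjective g).mpr fun c => LinearMap.range_eq_top.mp ?_
  exact (isSubfunctor_range g).eq_top_of_sup_range_lambdaMap hS hN (fun c _ => hsup c) c

theorem exists_lift_splitObj (f : N ⟶ M) (hf : Epi f) (S : Set C) (c : C)
    [Module.Projective R (splitObj R C M S c)] :
    ∃ t : splitObj R C M S c →ₗ[R] N.obj c,
      (splitObjπ M S c).hom ∘ₗ (f.app c).hom ∘ₗ t = LinearMap.id :=
  Module.projective_lifting_property ((splitObjπ M S c).hom ∘ₗ (f.app c).hom) _ <|
    (surjective_splitObjπ M S c).comp ((epi_iff_forall_surjective f).mp hf c)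

theorem sup_range_lambdaMap_eq_top_of_comp_eq_id {c : C} (t : splitObj R C M S c →ₗ[R] M.obj c)
    (ht : (splitObjπ M S c).hom ∘ₗ t = LinearMap.id) :
    LinearMap.range (lambdaMap R C M S c).hom ⊔ LinearMap.range t = ⊤ := by
  have hπ : (LinearMap.range t).map (splitObjπ M S c).hom = ⊤ := by
    rw [← LinearMap.range_comp, ht, LinearMap.range_id]
  rw [LinearMap.map_eq_top_iff (LinearMap.range_eq_top.mpr (surjective_splitObjπ M S c)),
    ker_splitObjπ] at hπ
  rwa [sup_comm]

theorem ker_le_range_lambdaMap_of_isMinimalEpi (hS : ArtinianSubset C S) (f : N ⟶ M)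
    (hf : Epi f) (hM : SGenerated R C M S) (hmin : IsMinimalEpi R C f)
    (hproj : ∀ c ∈ S, Module.Projective R (splitObj R C M S c)) (c : C) :
    LinearMap.ker (f.app c).hom ≤ LinearMap.range (lambdaMap R C N S c).hom := by
  have hlift : ∀ c, ∃ t : splitObj R C M S c →ₗ[R] N.obj c,
      c ∈ S → (splitObjπ M S c).hom ∘ₗ (f.app c).hom ∘ₗ t = LinearMap.id := by
    intro c
    by_cases hc : c ∈ S
    · have := hproj c hc
      exact (exists_lift_splitObj f hf S c).imp fun _ ht _ => ht
    · exact ⟨0, fun h => (hc h).elim⟩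
  choose t ht using hlift
  set P := generatedSubmodule N S fun c => LinearMap.range (t c)
  have hP : IsSubfunctor N P := isSubfunctor_generatedSubmodule
  have hfP : ∀ c, (P c).map (f.app c).hom = ⊤ := by
    refine (hP.map_app f).eq_top_of_sup_range_lambdaMap hS hM fun c hc => top_le_iff.mp ?_
    rw [← sup_range_lambdaMap_eq_top_of_comp_eq_id _ (ht c hc), LinearMap.range_comp]
    exact sup_le_sup_left (Submodule.map_mono
      (le_generatedSubmodule (G := fun c => LinearMap.range (t c)) hc)) _
  have hPN : ∀ c, P c = ⊤ := (epi_subfunctorι_iff hP).mp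
    ((hmin _ _).mp ((epi_subfunctorι_comp_iff hP f).mpr hfP))
  intro x hx
  have hxP : x ∈ P c := hPN c ▸ Submodule.mem_top
  by_cases hc : c ∈ S
  · obtain ⟨y, hy, _, ⟨v, rfl⟩, rfl⟩ :=
      Submodule.mem_sup.mp (generatedSubmodule_le_sup hxP)
    have hπy : splitObjπ M S c (f.app c y) = 0 :=
      (ker_splitObjπ M S c).ge (map_range_lambdaMap_le f S c ⟨y, hy, rfl⟩)
    have hv : v = 0 := by
      have h := congrArg (splitObjπ M S c) (LinearMap.mem_ker.mp hx)
      rw [map_add, map_add, hπy, zero_add, map_zero] at h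
      exact (LinearMap.congr_fun (ht c hc) v).symm.trans h
    rw [hv, map_zero, add_zero]
    exact hy
  · exact generatedSubmodule_le_range_lambdaMap hc hxP

end Minimality

/-- Let `S` be Artinian and `f : N ⟶ M` an epimorphism of `S`-generated
modules. If `(Ker f)(c) ⊆ Im λ_{N,c}` for all `c`, then `f` is minimal; conversely, if `f` is
minimal and `S_{S,c}M` is a projective `R`-module for all `c ∈ S`, then
`(Ker f)(c) ⊆ Im λ_{N,c}` for all `c`. -/
theorem statement12 (S : Set C) (hart : ArtinianSubset C S) {N M : C ⥤ ModuleCat.{0} R}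
    (f : N ⟶ M) (hf : Epi f) (hN : SGenerated R C N S) (hM : SGenerated R C M S) :
    ((∀ (c : C) (x : N.obj c), f.app c x = 0 → ∃ y, lambdaMap R C N S c y = x) →
      IsMinimalEpi R C f) ∧
    (IsMinimalEpi R C f → (∀ c ∈ S, Module.Projective R (splitObj R C M S c)) →
      ∀ (c : C) (x : N.obj c), f.app c x = 0 → ∃ y, lambdaMap R C N S c y = x) := by
  constructor
  · intro hker
    exact isMinimalEpi_of_ker_le_range_lambdaMap hart f hf hN fun c x hx => hker c x hx
  · intro hmin hproj c _ hx
    exact ker_le_range_lambdaMap_of_isMinimalEpi hart f hf hM hmin hproj c hx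

end Persist
end

section
/- Let R be a commutative ring, C a poset, S ⊆ C an Artinian subset, and M an S-generated RC-module. Then M is B_S(M)-generated; moreover, B_S(M) is the minimum element (under inclusion) of the set {T ⊆ S : M is T-generated}. -/
/-!
Both `μ_{M,c}` and `λ_{M,c}` are epimorphisms exactly when `M(c)` is spanned by the images of
the `M(d)` with `d ∈ S`, `d ≤ c` (resp. `d < c`). Hence if `M` is `T`-generated for some
`T ⊆ S` and `c ∉ T`, then `M(c)` is spanned by images from points of `S` strictly below `c`,
so `c` is not a birth: `B_S(M) ⊆ T`. Conversely, by Artinian induction on `d ∈ S`, the image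
of `M(d)` in any `M(c)` lies in the span of images from births: if `d` is not a birth, `M(d)`
itself is spanned by images from points of `S` strictly below `d`.
-/

open CategoryTheory Limits

namespace Persist

variable (R : Type) [CommRing R] (C : Type) [PartialOrder C]

section ColimitsOfModules

universe u v w w'

variable {A : Type u} [Ring A] {J : Type w} [Category.{w'} J]

lemma iSup_range_colimit_ι_eq_top (F : J ⥤ ModuleCat.{v} A) [HasColimit F] :
    ⨆ j, LinearMap.range (colimit.ι F j).hom = ⊤ := by
  set N := ⨆ j, LinearMap.range (colimit.ι F j).hom
  -- The quotient by `N` kills every leg, hence vanishes on the colimit.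
  have hquot : ModuleCat.ofHom N.mkQ = 0 := colimit.hom_ext fun j => by
    ext x
    exact (Submodule.Quotient.mk_eq_zero N).mpr
      (le_iSup (fun j => LinearMap.range (colimit.ι F j).hom) j (LinearMap.mem_range_self _ x))
  exact eq_top_iff.mpr fun x _ =>
    (Submodule.Quotient.mk_eq_zero N).mp (congrArg (fun f => f.hom x) hquot)

lemma range_colimit_desc_s13 (F : J ⥤ ModuleCat.{v} A) [HasColimit F] (cc : Cocone F) :
    LinearMap.range (colimit.desc F cc).hom =
      ⨆ j, LinearMap.range (show F.obj j ⟶ cc.pt from cc.ι.app j).hom := by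
  rw [LinearMap.range_eq_map, ← iSup_range_colimit_ι_eq_top, Submodule.map_iSup]
  simp only [← LinearMap.range_comp, ← ModuleCat.hom_comp, colimit.ι_desc]

lemma epi_colimit_desc_iff (F : J ⥤ ModuleCat.{v} A) [HasColimit F] (cc : Cocone F) :
    Epi (colimit.desc F cc) ↔
      ⨆ j, LinearMap.range (show F.obj j ⟶ cc.pt from cc.ι.app j).hom = ⊤ := by
  rw [ModuleCat.epi_iff_range_eq_top, range_colimit_desc_s13]

end ColimitsOfModules

variable {R C}

def imageSpan (M : C ⥤ ModuleCat.{0} R) (T : Set C) (c : C) : Submodule R (M.obj c) :=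
  ⨆ (d : C) (_ : d ∈ T) (hdc : d ≤ c), LinearMap.range (M.map (homOfLE hdc)).hom

section ImageSpan

variable {M : C ⥤ ModuleCat.{0} R} {S T : Set C} {c d : C}

lemma range_map_le_imageSpan (hd : d ∈ T) (hdc : d ≤ c) :
    LinearMap.range (M.map (homOfLE hdc)).hom ≤ imageSpan M T c :=
  le_iSup_of_le d <| le_iSup_of_le hd <|
    le_iSup (fun h : d ≤ c => LinearMap.range (M.map (homOfLE h)).hom) hdc

lemma imageSpan_mono (hST : S ⊆ T) : imageSpan M S c ≤ imageSpan M T c :=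
  iSup₂_le fun _ hd => iSup_le fun hdc => range_map_le_imageSpan (hST hd) hdc

lemma map_range_map {e : C} (hed : e ≤ d) (hdc : d ≤ c) :
    (LinearMap.range (M.map (homOfLE hed)).hom).map (M.map (homOfLE hdc)).hom =
      LinearMap.range (M.map (homOfLE (hed.trans hdc))).hom := by
  rw [← LinearMap.range_comp, ← ModuleCat.hom_comp, ← M.map_comp]
  rfl

lemma epi_muMap_iff_s13 : Epi (muMap R C M T c) ↔ imageSpan M T c = ⊤ := by
  rw [muMap, epi_colimit_desc_iff]
  congr! 1
  exact le_antisymm (iSup_le fun d => range_map_le_imageSpan d.property.1 d.property.2)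
    (iSup₂_le fun d hd => iSup_le fun hdc =>
      le_iSup_of_le (⟨d, hd, hdc⟩ : ObjectProperty.FullSubcategory _) le_rfl)

lemma epi_lambdaMap_iff : Epi (lambdaMap R C M S c) ↔ imageSpan M (S \ {c}) c = ⊤ := by
  rw [lambdaMap, epi_colimit_desc_iff]
  congr! 1
  refine le_antisymm
    (iSup_le fun d => range_map_le_imageSpan
      (Set.mem_sdiff_singleton.mpr ⟨d.property.1, d.property.2.ne⟩) d.property.2.le)
    (iSup₂_le fun d hd => iSup_le fun hdc => ?_)
  exact le_iSup_of_le (⟨d, hd.1, lt_of_le_of_ne hdc hd.2⟩ : ObjectProperty.FullSubcategory _)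
    le_rfl

lemma births_subset_of_sGenerated (hTS : T ⊆ S) (hT : SGenerated R C M T) :
    births R C M S ⊆ T := by
  intro c hc
  by_contra hcT
  refine hc (epi_lambdaMap_iff.mpr (eq_top_iff.mpr ?_))
  rw [← epi_muMap_iff_s13.mp (hT c)]
  exact imageSpan_mono fun d hd => ⟨hTS hd, fun hdc => hcT (hdc ▸ hd)⟩

lemma range_map_le_imageSpan_births (hart : ArtinianSubset C S) (hd : d ∈ S) (hdc : d ≤ c) :
    LinearMap.range (M.map (homOfLE hdc)).hom ≤ imageSpan M (births R C M S) c := by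
  refine hart.induction (P := fun d => ∀ c (hdc : d ≤ c),
    LinearMap.range (M.map (homOfLE hdc)).hom ≤ imageSpan M (births R C M S) c)
    hd (fun d hd IH c hdc => ?_) c hdc
  by_cases hb : d ∈ births R C M S
  · exact range_map_le_imageSpan hb hdc
  have hspan : imageSpan M (S \ {d}) d = ⊤ := epi_lambdaMap_iff.mp (not_not.mp hb)
  rw [LinearMap.range_eq_map, ← hspan, imageSpan]
  simp only [Submodule.map_iSup, map_range_map]
  exact iSup₂_le fun e he => iSup_le fun hed =>
    IH e he.1 (lt_of_le_of_ne hed he.2) c (hed.trans hdc)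

lemma sGenerated_births (hart : ArtinianSubset C S) (hM : SGenerated R C M S) :
    SGenerated R C M (births R C M S) := fun c => by
  rw [epi_muMap_iff_s13, eq_top_iff, ← epi_muMap_iff_s13.mp (hM c)]
  exact iSup₂_le fun _ hd => iSup_le fun hdc => range_map_le_imageSpan_births hart hd hdc

end ImageSpan

/-- If `S` is Artinian and `M` is `S`-generated, then `M` is
`B_S(M)`-generated, and `B_S(M)` is the minimum of `{T ⊆ S : M is T-generated}`. -/
theorem statement13 (S : Set C) (hart : ArtinianSubset C S) (M : C ⥤ ModuleCat.{0} R)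
    (hM : SGenerated R C M S) :
    (births R C M S ⊆ S ∧ SGenerated R C M (births R C M S)) ∧
    (∀ T ⊆ S, SGenerated R C M T → births R C M S ⊆ T) :=
  ⟨⟨births_subset_of_sGenerated subset_rfl hM, sGenerated_births hart hM⟩,
    fun _ => births_subset_of_sGenerated⟩

end Persist
end

section
/- Let G be a commutative cancellative monoid whose divisibility order makes it a partially ordered set that is weakly bounded from above (every finite subset has only finitely many minimal upper bounds). Then G is mub-complete if and only if every pair of elements g, h ∈ G has a maximal common divisor. -/
/-!
If `c = a * a' = b * b'`, then `d ↦ c / d` reverses divisibility and carries the upper bounds of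
`{a, b}` dividing `c` onto the common divisors of `a'` and `b'`. So a minimal upper bound `s ∣ c`
of `{a, b}` is the same thing as a maximal common divisor `c / s` of `a'` and `b'`; this gives
mub-completeness for pairs, and conversely (take `c = a * b`). From pairs one passes to any finite
set by induction: a minimal upper bound of `insert t S` below `c` is a minimal element of the set
of minimal upper bounds of `{m, t}` below `c`, `m` running over the minimal upper bounds of `S`;
weak boundedness makes that set finite.
-/

namespace Persist16

variable (G : Type) [CancelCommMonoid G]

/-- `c` is an upper bound of `T` in the divisibility order. -/
def IsDvdUB (T : Set G) (c : G) : Prop :=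
  ∀ t ∈ T, t ∣ c

/-- `c` is a minimal upper bound of `T` in the divisibility order. -/
def IsDvdMUB (T : Set G) (c : G) : Prop :=
  IsDvdUB G T c ∧ ∀ d : G, IsDvdUB G T d → d ∣ c → d = c

/-- `G` is weakly bounded from above: every finite subset has only finitely many minimal
upper bounds. -/
def DvdWeaklyBoundedAbove : Prop :=
  ∀ T : Set G, T.Finite → {c : G | IsDvdMUB G T c}.Finite

/-- `G` is mub-complete: for every finite non-empty subset `T` and every upper bound `c` of
`T` there exists a minimal upper bound `s` of `T` with `s ∣ c`. -/
def DvdMubComplete : Prop :=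
  ∀ T : Set G, T.Finite → T.Nonempty → ∀ c : G, IsDvdUB G T c →
    ∃ s : G, IsDvdMUB G T s ∧ s ∣ c

/-- `l` is a maximal common divisor of `g` and `h`. -/
def IsMaxCommonDivisor (g h l : G) : Prop :=
  l ∣ g ∧ l ∣ h ∧ ∀ k : G, k ∣ g → k ∣ h → l ∣ k → k = l

def DvdPairMubComplete : Prop :=
  ∀ a b c : G, a ∣ c → b ∣ c → ∃ s, IsDvdMUB G {a, b} s ∧ s ∣ c

section

variable {G}

theorem dvd_iff_dvd_of_mul_eq_mul {a b c d : G} (h : a * b = c * d) : a ∣ c ↔ d ∣ b :=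
  calc a ∣ c ↔ d * a ∣ d * c := (IsLeftRegular.all d).dvd_cancel_left.symm
    _ ↔ a * d ∣ a * b := by rw [mul_comm d a, mul_comm d c, ← h]
    _ ↔ d ∣ b := (IsLeftRegular.all a).dvd_cancel_left

theorem isDvdUB_pair_iff {a b d : G} : IsDvdUB G {a, b} d ↔ a ∣ d ∧ b ∣ d := by
  simp [IsDvdUB]

theorem isDvdUB_insert_iff {t d : G} {S : Set G} :
    IsDvdUB G (insert t S) d ↔ t ∣ d ∧ IsDvdUB G S d := by
  simp [IsDvdUB]

theorem isDvdMUB_pair_iff_isMaxCommonDivisor {a b a' b' s l : G} (ha : a * a' = s * l)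
    (hb : b * b' = s * l) : IsDvdMUB G {a, b} s ↔ IsMaxCommonDivisor G a' b' l := by
  have isDvdUB_iff {d e : G} (hde : d * e = s * l) : IsDvdUB G {a, b} d ↔ e ∣ a' ∧ e ∣ b' := by
    rw [isDvdUB_pair_iff, dvd_iff_dvd_of_mul_eq_mul (ha.trans hde.symm),
      dvd_iff_dvd_of_mul_eq_mul (hb.trans hde.symm)]
  constructor
  · rintro ⟨hub, hmin⟩
    obtain ⟨hla, hlb⟩ := (isDvdUB_iff rfl).1 hub
    refine ⟨hla, hlb, fun k hka hkb hlk => ?_⟩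
    obtain ⟨d, hd⟩ : k ∣ s * l := ha ▸ hka.mul_left a
    have hdk : d * k = s * l := by rw [hd, mul_comm]
    have hds : d = s :=
      hmin d ((isDvdUB_iff hdk).2 ⟨hka, hkb⟩) ((dvd_iff_dvd_of_mul_eq_mul hdk).2 hlk)
    exact mul_left_cancel (hds ▸ hdk)
  · rintro ⟨hla, hlb, hmax⟩
    refine ⟨(isDvdUB_iff rfl).2 ⟨hla, hlb⟩, fun d hd ⟨q, hq⟩ => ?_⟩
    have hdql : d * (q * l) = s * l := by rw [hq, mul_assoc]
    have hql : q * l = l := hmax _ ((isDvdUB_iff hdql).1 hd).1 ((isDvdUB_iff hdql).1 hd).2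
      (dvd_mul_left l q)
    rw [hq, mul_eq_right.1 hql, mul_one]

theorem dvdPairMubComplete_of_exists_isMaxCommonDivisor
    (hmcd : ∀ g h : G, ∃ l : G, IsMaxCommonDivisor G g h l) : DvdPairMubComplete G := by
  intro a b c ha hb
  obtain ⟨a', rfl⟩ := ha
  obtain ⟨b', hb'⟩ := hb
  obtain ⟨l, hl⟩ := hmcd a' b'
  obtain ⟨q, rfl⟩ := hl.1
  have hc : a * (l * q) = a * q * l := by rw [mul_comm l q, mul_assoc]
  exact ⟨a * q, (isDvdMUB_pair_iff_isMaxCommonDivisor hc (hb'.symm.trans hc)).2 hl,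
    hc ▸ dvd_mul_right _ _⟩

theorem exists_dvd_minimal_of_finite {W : Set G} (hW : W.Finite) (hne : W.Nonempty) :
    ∃ s ∈ W, ∀ r ∈ W, r ∣ s → s ∣ r := by
  let : LE G := ⟨(· ∣ ·)⟩
  have : IsTrans G (fun a b => b ≤ a) := ⟨fun _ _ _ hab hbc => dvd_trans hbc hab⟩
  obtain ⟨s, hs, hmin⟩ := hW.exists_minimal hne
  exact ⟨s, hs, fun _ hr => hmin hr⟩

theorem exists_isDvdMUB_of_finite (hanti : ∀ g h : G, g ∣ h → h ∣ g → g = h)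
    {T W : Set G} {c : G} (hW : W.Finite) (hWub : ∀ r ∈ W, IsDvdUB G T r ∧ r ∣ c)
    (hdom : ∀ d, IsDvdUB G T d → d ∣ c → ∃ r ∈ W, r ∣ d) (hc : IsDvdUB G T c) :
    ∃ s, IsDvdMUB G T s ∧ s ∣ c := by
  obtain ⟨r₀, hr₀, -⟩ := hdom c hc dvd_rfl
  obtain ⟨s, hsW, hsmin⟩ := exists_dvd_minimal_of_finite hW ⟨r₀, hr₀⟩
  obtain ⟨hsT, hsc⟩ := hWub s hsW
  refine ⟨s, ⟨hsT, fun d hd hds => hanti d s hds ?_⟩, hsc⟩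
  obtain ⟨r, hrW, hrd⟩ := hdom d hd (hds.trans hsc)
  exact (hsmin r hrW (hrd.trans hds)).trans hrd

theorem isDvdMUB_empty_one (hanti : ∀ g h : G, g ∣ h → h ∣ g → g = h) : IsDvdMUB G ∅ 1 :=
  ⟨fun _ h => absurd h (Set.notMem_empty _), fun d _ hd => hanti d 1 hd (one_dvd d)⟩

theorem exists_isDvdMUB_insert (hanti : ∀ g h : G, g ∣ h → h ∣ g → g = h)
    (hwba : DvdWeaklyBoundedAbove G)
    (hpair : DvdPairMubComplete G)
    {S : Set G} (hS : S.Finite) (ih : ∀ c, IsDvdUB G S c → ∃ m, IsDvdMUB G S m ∧ m ∣ c)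
    (t c : G) (hc : IsDvdUB G (insert t S) c) : ∃ s, IsDvdMUB G (insert t S) s ∧ s ∣ c := by
  set W : Set G := {r | ∃ m, IsDvdMUB G S m ∧ IsDvdMUB G {m, t} r ∧ r ∣ c}
  have hWfin : W.Finite :=
    ((hwba S hS).biUnion fun m _ => hwba {m, t} (Set.toFinite _)).subset
      fun r ⟨m, hm, hr, _⟩ => Set.mem_biUnion hm hr
  refine exists_isDvdMUB_of_finite hanti hWfin ?_ ?_ hc
  · rintro r ⟨m, hm, hr, hrc⟩
    obtain ⟨hmr, htr⟩ := isDvdUB_pair_iff.1 hr.1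
    exact ⟨isDvdUB_insert_iff.2 ⟨htr, fun x hx => (hm.1 x hx).trans hmr⟩, hrc⟩
  · intro d hd hdc
    obtain ⟨htd, hSd⟩ := isDvdUB_insert_iff.1 hd
    obtain ⟨m, hm, hmd⟩ := ih d hSd
    obtain ⟨r, hr, hrd⟩ := hpair m t d hmd htd
    exact ⟨r, ⟨m, hm, hr, hrd.trans hdc⟩, hrd⟩

theorem dvdMubComplete_of_dvdPairMubComplete (hanti : ∀ g h : G, g ∣ h → h ∣ g → g = h)
    (hwba : DvdWeaklyBoundedAbove G)
    (hpair : DvdPairMubComplete G) :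
    DvdMubComplete G := by
  rintro T hT -
  induction T, hT using Set.Finite.induction_on with
  | empty => exact fun c _ => ⟨1, isDvdMUB_empty_one hanti, one_dvd c⟩
  | @insert t S _ hS ih => exact exists_isDvdMUB_insert hanti hwba hpair hS ih t

end

/-- A commutative cancellative monoid whose divisibility order is a partial
order (antisymmetric) and which is weakly bounded from above is mub-complete iff every pair of
elements has a maximal common divisor. -/
theorem statement16 (hanti : ∀ g h : G, g ∣ h → h ∣ g → g = h)
    (hwba : DvdWeaklyBoundedAbove G) :
    DvdMubComplete G ↔ ∀ g h : G, ∃ l : G, IsMaxCommonDivisor G g h l := by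
  refine ⟨fun hmub g h => ?_, fun hmcd =>
    dvdMubComplete_of_dvdPairMubComplete hanti hwba <|
      dvdPairMubComplete_of_exists_isMaxCommonDivisor hmcd⟩
  -- with `{h, g}` and `c = h * g` the cofactors `c / h`, `c / g` come out as `g`, `h`, in order
  obtain ⟨s, hs, l, hl⟩ := hmub {h, g} (Set.toFinite _) (Set.insert_nonempty h {g}) (h * g)
    (isDvdUB_pair_iff.2 ⟨dvd_mul_right h g, dvd_mul_left g h⟩)
  exact ⟨l, (isDvdMUB_pair_iff_isMaxCommonDivisor hl (mul_comm g h ▸ hl)).1 hs⟩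

end Persist16
end

section
/- Let R be a commutative ring and C a poset that is weakly bounded from above and mub-complete. If an RC-module M is S-determined for some finite subset S ⊆ C, then M is Ŝ̂-presented, where Ŝ̂ is obtained by applying the hat operation twice to S; in particular Ŝ̂ is a finite support of a presentation (FSP) of M. -/
open CategoryTheory Limits

namespace Persist

variable (R : Type) [CommRing R] (C : Type) [PartialOrder C]

/-- The set of minimal upper bounds of `T`. -/
def mubSet (T : Set C) : Set C :=
  {c : C | c ∈ upperBounds T ∧ ∀ d ∈ upperBounds T, d ≤ c → d = c}

/-- The poset `C` is weakly bounded from above if every finite subset has only finitely many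
minimal upper bounds. -/
def WeaklyBoundedAbove : Prop :=
  ∀ T : Set C, T.Finite → (mubSet C T).Finite

/-- The poset `C` is mub-complete if for every finite non-empty subset `T` and
every upper bound `c` of `T` there is a minimal upper bound `s` of `T` with `s ≤ c`. -/
def MubComplete : Prop :=
  ∀ T : Set C, T.Finite → T.Nonempty → ∀ c ∈ upperBounds T, ∃ s ∈ mubSet C T, s ≤ c

/-- The hat operation: the set of minimal upper bounds of non-empty subsets of `S`. -/
def hatSet (S : Set C) : Set C :=
  {c : C | ∃ T : Set C, T ⊆ S ∧ T.Nonempty ∧ c ∈ mubSet C T}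

/-- `M` is `S`-determined: `supp M ⊆ ↑S` and whenever `c ≤ d` with
`S ∩ ↓c = S ∩ ↓d`, the map `M(c ≤ d)` is an isomorphism. -/
def SDetermined (M : C ⥤ ModuleCat.{0} R) (S : Set C) : Prop :=
  supp R C M ⊆ {c : C | ∃ s ∈ S, s ≤ c} ∧
    ∀ (c d : C) (h : c ≤ d), S ∩ Set.Iic c = S ∩ Set.Iic d → IsIso (M.map (homOfLE h))

section Colimit

variable {J D : Type*} [Category J] [Category D] {F : J ⥤ D} [HasColimit F] (t : Cocone F)
  {g : t.pt ⟶ colimit F}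

lemma colimit_ι_eq_comp_of_hom {j k : J} (f : j ⟶ k) (hk : colimit.ι F k = t.ι.app k ≫ g) :
    colimit.ι F j = t.ι.app j ≫ g := by
  rw [← colimit.w F f, hk, ← t.w f, Category.assoc]

lemma colimit_ι_eq_comp_of_isIso_map {j k : J} (f : j ⟶ k) (hf : IsIso (F.map f))
    (hj : colimit.ι F j = t.ι.app j ≫ g) : colimit.ι F k = t.ι.app k ≫ g := by
  rw [← cancel_epi (F.map f), colimit.w, hj, ← Category.assoc, t.w]

lemma isIso_colimit_desc_of_colimit_ι_eq (j₀ : J) [IsIso (t.ι.app j₀)]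
    (h : ∀ j, colimit.ι F j = t.ι.app j ≫ inv (t.ι.app j₀) ≫ colimit.ι F j₀) :
    IsIso (colimit.desc F t) :=
  ⟨⟨inv (t.ι.app j₀) ≫ colimit.ι F j₀, by ext j; simp [← h j], by simp⟩⟩

end Colimit

section Hat

variable {C}

lemma finite_hatSet (hwba : WeaklyBoundedAbove C) {S : Set C} (hS : S.Finite) :
    (hatSet C S).Finite := by
  refine ((hS.finite_subsets).biUnion fun T hT => hwba T (hS.subset hT)).subset ?_
  rintro c ⟨T, hTS, -, hc⟩
  exact Set.mem_biUnion hTS hc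

lemma subset_hatSet (S : Set C) : S ⊆ hatSet C S := fun s hs =>
  ⟨{s}, Set.singleton_subset_iff.mpr hs, Set.singleton_nonempty s,
    fun _ hx => le_of_eq hx, fun _ hd hds => le_antisymm hds (hd rfl)⟩

lemma exists_le_of_mem_hatSet {S : Set C} {d : C} (hd : d ∈ hatSet C S) : ∃ u ∈ S, u ≤ d := by
  obtain ⟨T, hTS, ⟨t, ht⟩, hub, -⟩ := hd
  exact ⟨t, hTS ht, hub ht⟩

lemma exists_le_of_mem_hatSet_hatSet {S : Set C} {d : C} (hd : d ∈ hatSet C (hatSet C S)) :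
    ∃ u ∈ S, u ≤ d := by
  obtain ⟨u, hu, hud⟩ := exists_le_of_mem_hatSet hd
  obtain ⟨v, hv, hvu⟩ := exists_le_of_mem_hatSet hu
  exact ⟨v, hv, hvu.trans hud⟩

lemma exists_mem_hatSet_mem_upperBounds_le (hmub : MubComplete C) {S T : Set C} (hTS : T ⊆ S)
    (hT : T.Finite) (hne : T.Nonempty) {c : C} (hc : c ∈ upperBounds T) :
    ∃ s ∈ hatSet C S, s ∈ upperBounds T ∧ s ≤ c := by
  obtain ⟨s, hs, hsc⟩ := hmub T hT hne c hc
  exact ⟨s, ⟨T, hTS, hne, hs⟩, hs.1, hsc⟩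

lemma inter_Iic_eq_of_le_of_le {S : Set C} {a b c : C} (hab : a ≤ b) (hbc : b ≤ c)
    (h : S ∩ Set.Iic a = S ∩ Set.Iic c) : S ∩ Set.Iic a = S ∩ Set.Iic b :=
  (Set.inter_subset_inter_right S (Set.Iic_subset_Iic.mpr hab)).antisymm
    (h ▸ Set.inter_subset_inter_right S (Set.Iic_subset_Iic.mpr hbc))

lemma exists_mem_hatSet_inter_Iic_eq (hmub : MubComplete C) {S : Set C} (hS : S.Finite) {d : C}
    (hne : (S ∩ Set.Iic d).Nonempty) :
    ∃ s ∈ hatSet C S, s ≤ d ∧ S ∩ Set.Iic s = S ∩ Set.Iic d := by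
  obtain ⟨s, hs, hub, hsd⟩ := exists_mem_hatSet_mem_upperBounds_le hmub Set.inter_subset_left
    (hS.inter_of_left _) hne fun _ hx => hx.2
  exact ⟨s, hs, hsd, (Set.inter_subset_inter_right S (Set.Iic_subset_Iic.mpr hsd)).antisymm
    fun x hx => ⟨hx.1, hub hx⟩⟩

end Hat

section Determined

variable {R C}

lemma isZero_obj_of_not_nonempty_inter_Iic {M : C ⥤ ModuleCat.{0} R} {S : Set C}
    (hdet : SDetermined R C M S) {c : C} (h : ¬ (S ∩ Set.Iic c).Nonempty) : IsZero (M.obj c) := by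
  by_contra hc
  obtain ⟨s, hs, hsc⟩ := hdet.1 hc
  exact h ⟨s, hs, hsc⟩

/- With `s = c♯ ∈ Ŝ` a minimal upper bound of `S ∩ ↓c` below `c`, `M(c♯ ≤ c)` is an isomorphism
and the inverse of `μ` is its inverse followed by the colimit inclusion at `c♯`. For `d ∈ Ŝ̂` below
`c`, a minimal upper bound `e ∈ Ŝ̂` of `{d♯, c♯}` below `c` (with `d' = d♯`) joins `d` to `c♯` by the
zigzag `d ≥ d♯ ≤ e ≥ c♯`, whose outer legs `M` sends to isomorphisms. -/
lemma isIso_muMap_hatSet_hatSet (hmub : MubComplete C) {M : C ⥤ ModuleCat.{0} R} {S : Set C}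
    (hS : S.Finite) (hdet : SDetermined R C M S) {c : C} (hne : (S ∩ Set.Iic c).Nonempty) :
    IsIso (muMap R C M (hatSet C (hatSet C S)) c) := by
  obtain ⟨s, hs, hsc, hsc_eq⟩ := exists_mem_hatSet_inter_Iic_eq hmub hS hne
  have : IsIso (M.map (homOfLE hsc)) := hdet.2 s c hsc hsc_eq
  refine isIso_colimit_desc_of_colimit_ι_eq _ ⟨s, subset_hatSet _ hs, hsc⟩ ?_
  rintro ⟨d, hdV, hdc⟩
  obtain ⟨u, hu, hud⟩ := exists_le_of_mem_hatSet_hatSet hdV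
  obtain ⟨d', hd', hd'd, hd'd_eq⟩ := exists_mem_hatSet_inter_Iic_eq hmub hS ⟨u, hu, hud⟩
  obtain ⟨e, he, hub, hec⟩ := exists_mem_hatSet_mem_upperBounds_le hmub
    (Set.pair_subset hd' hs) (Set.toFinite _) (Set.insert_nonempty _ _)
    (c := c) (by simpa [upperBounds] using ⟨hd'd.trans hdc, hsc⟩)
  have hse : s ≤ e := hub (by simp)
  have hd'e : d' ≤ e := hub (by simp)
  refine colimit_ι_eq_comp_of_isIso_map _ (j := ⟨d', subset_hatSet _ hd', hd'd.trans hdc⟩)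
    (ObjectProperty.homMk (homOfLE hd'd)) (by exact hdet.2 d' d hd'd hd'd_eq) ?_
  refine colimit_ι_eq_comp_of_hom _ (k := ⟨e, he, hec⟩) (ObjectProperty.homMk (homOfLE hd'e)) ?_
  exact colimit_ι_eq_comp_of_isIso_map _ (j := ⟨s, subset_hatSet _ hs, hsc⟩)
    (ObjectProperty.homMk (homOfLE hse))
    (by exact hdet.2 s e hse (inter_Iic_eq_of_le_of_le hse hec hsc_eq)) (by simp)

end Determined

/-- If `C` is weakly bounded from above and mub-complete and `M` is
`S`-determined for a finite `S ⊆ C`, then `M` is `Ŝ̂`-presented; in particular `Ŝ̂` is a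
finite support of a presentation (FSP) of `M`. -/
theorem statement17 (hwba : WeaklyBoundedAbove C) (hmub : MubComplete C)
    (M : C ⥤ ModuleCat.{0} R) (S : Set C) (hS : S.Finite) (hdet : SDetermined R C M S) :
    (hatSet C (hatSet C S)).Finite ∧ SPresented R C M (hatSet C (hatSet C S)) := by
  refine ⟨finite_hatSet hwba (finite_hatSet hwba hS), fun c => ?_⟩
  by_cases hne : (S ∩ Set.Iic c).Nonempty
  · exact isIso_muMap_hatSet_hatSet hmub hS hdet hne
  · have hzero : ∀ d ≤ c, IsZero (M.obj d) := fun d hdc =>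
      isZero_obj_of_not_nonempty_inter_Iic hdet fun ⟨u, hu, hud⟩ => hne ⟨u, hu, hud.trans hdc⟩
    refine IsZero.isIso ?_ (hzero c le_rfl) _
    exact (colimit.isColimit _).isZero_pt (Functor.isZero _ fun d => hzero d.1 d.2.2)

end Persist
end
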